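/- If A is a commutative ring that is finitely generated as a Z-algebra, then the residue field A/q of any maximal ideal q is a finite field. -/

import Mathlib

/-!
`ℤ` is a Jacobson ring: its nonzero primes are maximal and its Jacobson radical is zero. By the
general Nullstellensatz, a field of finite type over a Jacobson ring is finite over it, so `A ⧸ q`
is a finitely generated abelian group. Being a field integral over `ℤ`, it cannot contain `ℤ`,
so some nonzero integer kills it, and a finitely generated torsion abelian group is finite.
-/

open Function

theorem isJacobsonRing_of_jacobson_bot_eq_bot {R : Type*} [CommRing R] [Ring.DimensionLEOne R]
    (h : (⊥ : Ideal R).jacobson = ⊥) : IsJacobsonRing R := by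
  refine isJacobsonRing_iff_prime_eq.mpr fun P hP => ?_
  rcases eq_or_ne P ⊥ with rfl | hP0
  · exact h
  · have := hP.isMaximal hP0
    exact Ideal.jacobson_eq_self_of_isMaximal

theorem Int.jacobson_bot : (⊥ : Ideal ℤ).jacobson = ⊥ := by
  refine le_antisymm (fun x hx => ?_) Ideal.le_jacobson
  -- `x + 1` and `1 - x` are both units, i.e. `±1`
  have h₁ := Ideal.mem_jacobson_bot.mp hx 1
  have h₂ := Ideal.mem_jacobson_bot.mp hx (-1)
  rw [Int.isUnit_iff] at h₁ h₂
  rw [Ideal.mem_bot]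
  omega

instance Int.isJacobsonRing : IsJacobsonRing ℤ :=
  isJacobsonRing_of_jacobson_bot_eq_bot Int.jacobson_bot

theorem exists_intCast_eq_zero_of_isIntegral (K : Type*) [Field K] [Algebra.IsIntegral ℤ K] :
    ∃ n : ℤ, n ≠ 0 ∧ (n : K) = 0 := by
  have hninj : ¬ Injective (algebraMap ℤ K) := fun hinj =>
    Int.not_isField (isField_of_isIntegral_of_isField hinj (Field.toIsField K))
  simp only [injective_iff_map_eq_zero, not_forall, exists_prop] at hninj
  obtain ⟨n, hn, hn0⟩ := hninj
  exact ⟨n, hn0, by simpa using hn⟩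

theorem Field.finite_of_moduleFinite_int (K : Type*) [Field K] [Module.Finite ℤ K] : Finite K := by
  obtain ⟨n, hn0, hn⟩ := exists_intCast_eq_zero_of_isIntegral K
  refine Module.finite_of_fg_torsion K fun x => ⟨⟨n, mem_nonZeroDivisors_of_ne_zero hn0⟩, ?_⟩
  change n • x = 0
  rw [zsmul_eq_mul, hn, zero_mul]

/-- If `A` is a finitely generated `ℤ`-algebra and `q` a maximal ideal of `A`,
then the residue field `A/q` is finite. -/
theorem stmt4 (A : Type*) [CommRing A] [Algebra.FiniteType ℤ A]
    (q : Ideal A) (hq : q.IsMaximal) : Finite (A ⧸ q) := by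
  let := Ideal.Quotient.field q
  have : Module.Finite ℤ (A ⧸ q) := finite_of_finite_type_of_isJacobsonRing ℤ (A ⧸ q)
  exact Field.finite_of_moduleFinite_int (A ⧸ q)
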